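/- Let V ∈ L¹(ℝ²) be real-valued and satisfy ∫∫_{‖x−y‖<e} |V(x)|·(ln‖x−y‖)²·|V(y)| d(x,y) < ∞. Then for every α > 0 the double integral ∫_{ℝ²×ℝ²} |V(x)|·G(x,y;α)²·|V(y)| d(x,y) is finite (i.e., the Birman–Schwinger operator Q(α) is Hilbert–Schmidt). -/

import Mathlib

open MeasureTheory

/-- The modified Bessel function of the second kind of order zero,
via its integral representation `K₀(w) = ∫₀^∞ exp(−w·cosh t) dt`. -/
noncomputable def K0 (w : ℝ) : ℝ := ∫ t in Set.Ioi (0 : ℝ), Real.exp (-w * Real.cosh t)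

/-- The Green's function of the free resolvent `(-Δ + α²)⁻¹` in two dimensions:
`G(x,y;α) = (1/(2π))·K₀(α‖x−y‖)`. -/
noncomputable def G (x y : EuclideanSpace ℝ (Fin 2)) (α : ℝ) : ℝ :=
  (1 / (2 * Real.pi)) * K0 (α * ‖x - y‖)

lemma K0_nonneg (w : ℝ) : 0 ≤ K0 w :=
  integral_nonneg fun _ => (Real.exp_pos _).le

lemma K0_zero : K0 0 = 0 := by
  have h : (fun t : ℝ => Real.exp (-(0:ℝ) * Real.cosh t)) = fun _ => (1:ℝ) := by
    funext t; simp
  rw [K0, h, setIntegral_const, measureReal_def, Real.volume_Ioi]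
  simp

lemma aux_integrable {c : ℝ} (hc : 0 < c) :
    IntegrableOn (fun t => Real.exp (-(c * Real.exp t))) (Set.Ioi (0:ℝ)) := by
  apply Integrable.mono ((exp_neg_integrableOn_Ioi 0 hc).const_mul (Real.exp (-c)))
  · exact (Real.continuous_exp.comp
      ((continuous_const.mul Real.continuous_exp).neg)).aestronglyMeasurable
  · filter_upwards with t
    rw [Real.norm_eq_abs, Real.norm_eq_abs, abs_of_nonneg (Real.exp_pos _).le,
      abs_of_nonneg (by positivity), ← Real.exp_add]
    apply Real.exp_le_exp.2
    have h1 : t + 1 ≤ Real.exp t := Real.add_one_le_exp t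
    nlinarith

lemma aux_bound {c : ℝ} (hc : 0 < c) :
    ∫ t in Set.Ioi (0:ℝ), Real.exp (-(c * Real.exp t)) ≤ max (Real.log c⁻¹) 0 + 1 := by
  set T := max (Real.log c⁻¹) 0 with hTdef
  have hT0 : 0 ≤ T := le_max_right _ _
  have hceT : 1 ≤ c * Real.exp T := by
    have h1 : Real.log c⁻¹ ≤ T := le_max_left _ _
    have h2 : c⁻¹ ≤ Real.exp T := by
      rw [← Real.exp_log (inv_pos.2 hc)]; exact Real.exp_le_exp.2 h1
    rw [← mul_inv_cancel₀ hc.ne']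
    exact mul_le_mul_of_nonneg_left h2 hc.le
  have hint : IntegrableOn (fun t => Real.exp (-(c * Real.exp t))) (Set.Ioi (0:ℝ)) :=
    aux_integrable hc
  have h1 : IntegrableOn (fun t => Real.exp (-(c * Real.exp t))) (Set.Ioc 0 T) :=
    hint.mono_set Set.Ioc_subset_Ioi_self
  have h2 : IntegrableOn (fun t => Real.exp (-(c * Real.exp t))) (Set.Ioi T) :=
    hint.mono_set (Set.Ioi_subset_Ioi hT0)
  have hsplit : ∫ t in Set.Ioi (0:ℝ), Real.exp (-(c * Real.exp t))
      = (∫ t in Set.Ioc (0:ℝ) T, Real.exp (-(c * Real.exp t)))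
        + ∫ t in Set.Ioi T, Real.exp (-(c * Real.exp t)) := by
    rw [← setIntegral_union (Set.Ioc_disjoint_Ioi le_rfl) measurableSet_Ioi h1 h2,
      Set.Ioc_union_Ioi_eq_Ioi hT0]
  have hb1 : ∫ t in Set.Ioc (0:ℝ) T, Real.exp (-(c * Real.exp t)) ≤ T := by
    have hconst : IntegrableOn (fun _ : ℝ => (1:ℝ)) (Set.Ioc 0 T) :=
      integrableOn_const measure_Ioc_lt_top.ne
    calc ∫ t in Set.Ioc (0:ℝ) T, Real.exp (-(c * Real.exp t))
        ≤ ∫ _ in Set.Ioc (0:ℝ) T, (1:ℝ) := by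
          apply setIntegral_mono_on h1 hconst measurableSet_Ioc
          intro t _
          rw [← Real.exp_zero]
          exact Real.exp_le_exp.2 (neg_nonpos.2 (by positivity))
      _ = T := by
          rw [setIntegral_const, measureReal_def, Real.volume_Ioc, smul_eq_mul, mul_one,
            ENNReal.toReal_ofReal (by linarith)]
          ring
  have hb2 : ∫ t in Set.Ioi T, Real.exp (-(c * Real.exp t)) ≤ 1 := by
    have hg : IntegrableOn (fun t => Real.exp (T - 1) * Real.exp (-t)) (Set.Ioi T) := by
      have := (exp_neg_integrableOn_Ioi T (one_pos)).const_mul (Real.exp (T - 1))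
      simpa [IntegrableOn] using this
    calc ∫ t in Set.Ioi T, Real.exp (-(c * Real.exp t))
        ≤ ∫ t in Set.Ioi T, Real.exp (T - 1) * Real.exp (-t) := by
          apply setIntegral_mono_on h2 hg measurableSet_Ioi
          intro t ht
          rw [← Real.exp_add]
          apply Real.exp_le_exp.2
          have h3 : (t - T) + 1 ≤ Real.exp (t - T) := Real.add_one_le_exp _
          have h4 : c * Real.exp t = (c * Real.exp T) * Real.exp (t - T) := by
            rw [mul_assoc, ← Real.exp_add]; ring_nf
          have h5 : (1:ℝ) * ((t - T) + 1) ≤ (c * Real.exp T) * Real.exp (t - T) := by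
            apply mul_le_mul hceT h3 (by linarith [le_of_lt (Set.mem_Ioi.1 ht)]) (by linarith)
          rw [h4]; linarith
      _ = Real.exp (T - 1) * Real.exp (-T) := by
          rw [integral_const_mul, integral_exp_neg_Ioi]
      _ = Real.exp (-1) := by rw [← Real.exp_add]; ring_nf
      _ ≤ 1 := by rw [← Real.exp_zero]; exact Real.exp_le_exp.2 (by norm_num)
  rw [hsplit]; linarith

lemma K0_le {w : ℝ} (hw : 0 < w) : K0 w ≤ max (Real.log (2 / w)) 0 + 1 := by
  have hc : 0 < w / 2 := by linarith
  have hint := aux_integrable hc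
  have hbd : ∀ t : ℝ, Real.exp (-w * Real.cosh t) ≤ Real.exp (-(w / 2 * Real.exp t)) := by
    intro t
    apply Real.exp_le_exp.2
    have hch : Real.exp t / 2 ≤ Real.cosh t := by
      rw [Real.cosh_eq]
      have := (Real.exp_pos (-t)).le
      linarith
    nlinarith
  have hint0 : IntegrableOn (fun t => Real.exp (-w * Real.cosh t)) (Set.Ioi (0:ℝ)) := by
    apply Integrable.mono' hint
    · exact Continuous.aestronglyMeasurable (by fun_prop)
    · filter_upwards with t
      rw [Real.norm_eq_abs, abs_of_nonneg (Real.exp_pos _).le]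
      exact hbd t
  calc K0 w ≤ ∫ t in Set.Ioi (0:ℝ), Real.exp (-(w / 2 * Real.exp t)) :=
        setIntegral_mono_on hint0 hint measurableSet_Ioi fun t _ => hbd t
    _ ≤ max (Real.log (w / 2)⁻¹) 0 + 1 := aux_bound hc
    _ = max (Real.log (2 / w)) 0 + 1 := by rw [inv_div]

set_option maxHeartbeats 2000000 in
/-- If `V ∈ L¹(ℝ²)` is real-valued and satisfies condition (V_roll), i.e.
`∫∫_{‖x−y‖<e} |V(x)|·(ln‖x−y‖)²·|V(y)| d(x,y) < ∞`, then for every `α > 0` the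
double integral `∫∫ |V(x)|·G(x,y;α)²·|V(y)| d(x,y)` is finite, i.e. the
Birman–Schwinger operator `Q(α)` is Hilbert–Schmidt. -/
theorem birman_schwinger_hilbert_schmidt
    (V : EuclideanSpace ℝ (Fin 2) → ℝ) (hV : Integrable V)
    (hroll : ∫⁻ p in {p : EuclideanSpace ℝ (Fin 2) × EuclideanSpace ℝ (Fin 2) |
        ‖p.1 - p.2‖ < Real.exp 1},
      ENNReal.ofReal (|V p.1| * (Real.log ‖p.1 - p.2‖) ^ 2 * |V p.2|) < ⊤)
    (α : ℝ) (hα : 0 < α) :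
    ∫⁻ p : EuclideanSpace ℝ (Fin 2) × EuclideanSpace ℝ (Fin 2),
      ENNReal.ofReal (|V p.1| * (G p.1 p.2 α) ^ 2 * |V p.2|) < ⊤ := by
  classical
  set S : Set (EuclideanSpace ℝ (Fin 2) × EuclideanSpace ℝ (Fin 2)) := {p : EuclideanSpace ℝ (Fin 2) × EuclideanSpace ℝ (Fin 2) | ‖p.1 - p.2‖ < Real.exp 1} with hSdef
  have hS : MeasurableSet S := by
    have hcont : Continuous fun p : EuclideanSpace ℝ (Fin 2) × EuclideanSpace ℝ (Fin 2) => ‖p.1 - p.2‖ :=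
      (continuous_fst.sub continuous_snd).norm
    exact measurableSet_lt hcont.measurable measurable_const
  -- constants
  set c0 : ℝ := (1 / (2 * Real.pi)) ^ 2 with hc0def
  have hc0 : 0 ≤ c0 := by rw [hc0def]; positivity
  set Cα : ℝ := |Real.log 2 - Real.log α| + 1 with hCadef
  have hCa : 0 ≤ Cα := by rw [hCadef]; positivity
  set Bα : ℝ := max (Real.log (2 / (α * Real.exp 1))) 0 + 1 with hBadef
  have hBa : 0 ≤ Bα := by rw [hBadef]; positivity
  set A : ℝ := c0 * (2 * Cα ^ 2 + Bα ^ 2) with hAdef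
  have hA : 0 ≤ A := by rw [hAdef]; positivity
  set B : ℝ := 2 * c0 with hBdef
  have hB : 0 ≤ B := by rw [hBdef]; positivity
  -- auxiliary functions
  set g : EuclideanSpace ℝ (Fin 2) × EuclideanSpace ℝ (Fin 2) → ENNReal := fun p => ENNReal.ofReal |V p.1| * ENNReal.ofReal |V p.2| with hgdef
  set h : EuclideanSpace ℝ (Fin 2) × EuclideanSpace ℝ (Fin 2) → ENNReal :=
    fun p => ENNReal.ofReal (|V p.1| * (Real.log ‖p.1 - p.2‖) ^ 2 * |V p.2|) with hhdef
  -- pointwise bound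
  have key : ∀ p : EuclideanSpace ℝ (Fin 2) × EuclideanSpace ℝ (Fin 2), ENNReal.ofReal (|V p.1| * (G p.1 p.2 α) ^ 2 * |V p.2|)
      ≤ ENNReal.ofReal A * g p + ENNReal.ofReal B * S.indicator h p := by
    intro p
    obtain ⟨x, y⟩ := p
    have ha : (0:ℝ) ≤ |V x| := abs_nonneg _
    have hb : (0:ℝ) ≤ |V y| := abs_nonneg _
    have hgxy : g (x, y) = ENNReal.ofReal (|V x| * |V y|) := by
      rw [hgdef, ENNReal.ofReal_mul ha]
    by_cases hre : ‖x - y‖ < Real.exp 1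
    · -- near region
      have hK2 : K0 (α * ‖x - y‖) ^ 2 ≤ 2 * Cα ^ 2 + 2 * (Real.log ‖x - y‖) ^ 2 := by
        rcases eq_or_lt_of_le (norm_nonneg (x - y)) with h0 | h0
        · rw [← h0, mul_zero, K0_zero]
          norm_num
          positivity
        · have hw : 0 < α * ‖x - y‖ := mul_pos hα h0
          have h1 : K0 (α * ‖x - y‖) ≤ |Real.log ‖x - y‖| + Cα := by
            refine (K0_le hw).trans ?_
            have hlog : Real.log (2 / (α * ‖x - y‖))
                = Real.log 2 - Real.log α - Real.log ‖x - y‖ := by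
              rw [Real.log_div (by norm_num) hw.ne', Real.log_mul hα.ne' h0.ne']
              ring
            rw [hlog]
            have h2 := le_abs_self (Real.log 2 - Real.log α)
            have h3 := neg_abs_le (Real.log ‖x - y‖)
            have h4 : (0:ℝ) ≤ |Real.log 2 - Real.log α| + |Real.log ‖x - y‖| := by positivity
            have h5 := max_le (show Real.log 2 - Real.log α - Real.log ‖x - y‖
              ≤ |Real.log 2 - Real.log α| + |Real.log ‖x - y‖| by linarith) h4
            rw [hCadef]
            linarith
          have hK0n : 0 ≤ K0 (α * ‖x - y‖) := K0_nonneg _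
          nlinarith [sq_abs (Real.log ‖x - y‖), sq_nonneg (|Real.log ‖x - y‖| - Cα)]
      have hGsq : (G x y α) ^ 2 ≤ c0 * (2 * Cα ^ 2 + 2 * (Real.log ‖x - y‖) ^ 2) := by
        have hGeq : (G x y α) ^ 2 = c0 * K0 (α * ‖x - y‖) ^ 2 := by
          rw [G, mul_pow, hc0def]
        rw [hGeq]
        exact mul_le_mul_of_nonneg_left hK2 hc0
      have hreal : |V x| * (G x y α) ^ 2 * |V y|
          ≤ (B * Cα ^ 2) * (|V x| * |V y|)
            + B * (|V x| * (Real.log ‖x - y‖) ^ 2 * |V y|) := by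
        have h4 : |V x| * (G x y α) ^ 2 * |V y|
            ≤ |V x| * (c0 * (2 * Cα ^ 2 + 2 * (Real.log ‖x - y‖) ^ 2)) * |V y| :=
          mul_le_mul_of_nonneg_right (mul_le_mul_of_nonneg_left hGsq ha) hb
        calc |V x| * (G x y α) ^ 2 * |V y|
            ≤ |V x| * (c0 * (2 * Cα ^ 2 + 2 * (Real.log ‖x - y‖) ^ 2)) * |V y| := h4
          _ = (B * Cα ^ 2) * (|V x| * |V y|)
              + B * (|V x| * (Real.log ‖x - y‖) ^ 2 * |V y|) := by rw [hBdef]; ring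
      have hmem : (x, y) ∈ S := hre
      calc ENNReal.ofReal (|V x| * (G x y α) ^ 2 * |V y|)
          ≤ ENNReal.ofReal ((B * Cα ^ 2) * (|V x| * |V y|)
              + B * (|V x| * (Real.log ‖x - y‖) ^ 2 * |V y|)) :=
            ENNReal.ofReal_le_ofReal hreal
        _ = ENNReal.ofReal ((B * Cα ^ 2) * (|V x| * |V y|))
              + ENNReal.ofReal (B * (|V x| * (Real.log ‖x - y‖) ^ 2 * |V y|)) :=
            ENNReal.ofReal_add (mul_nonneg (mul_nonneg hB (sq_nonneg Cα)) (mul_nonneg ha hb))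
              (mul_nonneg hB (mul_nonneg (mul_nonneg ha (sq_nonneg _)) hb))
        _ = ENNReal.ofReal (B * Cα ^ 2) * ENNReal.ofReal (|V x| * |V y|)
              + ENNReal.ofReal B
                * ENNReal.ofReal (|V x| * (Real.log ‖x - y‖) ^ 2 * |V y|) := by
            rw [ENNReal.ofReal_mul' (mul_nonneg ha hb),
              ENNReal.ofReal_mul' (mul_nonneg (mul_nonneg ha (sq_nonneg (Real.log ‖x - y‖))) hb)]
        _ ≤ ENNReal.ofReal A * g (x, y) + ENNReal.ofReal B * S.indicator h (x, y) := by
            rw [hgxy, Set.indicator_of_mem hmem, hhdef]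
            refine add_le_add (mul_le_mul_left (ENNReal.ofReal_le_ofReal ?_) _) le_rfl
            rw [hAdef, hBdef]
            nlinarith [sq_nonneg Bα]
    · -- far region
      have hre' : Real.exp 1 ≤ ‖x - y‖ := not_lt.1 hre
      have hr0 : 0 < ‖x - y‖ := lt_of_lt_of_le (Real.exp_pos 1) hre'
      have hw : 0 < α * ‖x - y‖ := mul_pos hα hr0
      have hK : K0 (α * ‖x - y‖) ≤ Bα := by
        refine (K0_le hw).trans ?_
        have hdiv : 2 / (α * ‖x - y‖) ≤ 2 / (α * Real.exp 1) := by
          apply div_le_div_of_nonneg_left (by norm_num) (by positivity)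
          exact mul_le_mul_of_nonneg_left hre' hα.le
        have hle : Real.log (2 / (α * ‖x - y‖)) ≤ Real.log (2 / (α * Real.exp 1)) :=
          Real.log_le_log (by positivity) hdiv
        rw [hBadef]
        exact add_le_add (max_le_max hle le_rfl) le_rfl
      have hK0n : 0 ≤ K0 (α * ‖x - y‖) := K0_nonneg _
      have hK2 : K0 (α * ‖x - y‖) ^ 2 ≤ Bα ^ 2 := by nlinarith
      have hGsq : (G x y α) ^ 2 ≤ c0 * Bα ^ 2 := by
        have hGeq : (G x y α) ^ 2 = c0 * K0 (α * ‖x - y‖) ^ 2 := by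
          rw [G, mul_pow, hc0def]
        rw [hGeq]
        exact mul_le_mul_of_nonneg_left hK2 hc0
      have hreal : |V x| * (G x y α) ^ 2 * |V y| ≤ A * (|V x| * |V y|) := by
        have h4 : |V x| * (G x y α) ^ 2 * |V y| ≤ |V x| * (c0 * Bα ^ 2) * |V y| :=
          mul_le_mul_of_nonneg_right (mul_le_mul_of_nonneg_left hGsq ha) hb
        have hcA : c0 * Bα ^ 2 ≤ A := by
          rw [hAdef]
          nlinarith [mul_nonneg hc0 (sq_nonneg Cα)]
        have h5 : |V x| * (c0 * Bα ^ 2) * |V y| = (c0 * Bα ^ 2) * (|V x| * |V y|) := by ring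
        have h6 : (c0 * Bα ^ 2) * (|V x| * |V y|) ≤ A * (|V x| * |V y|) :=
          mul_le_mul_of_nonneg_right hcA (mul_nonneg ha hb)
        linarith
      calc ENNReal.ofReal (|V x| * (G x y α) ^ 2 * |V y|)
          ≤ ENNReal.ofReal (A * (|V x| * |V y|)) := ENNReal.ofReal_le_ofReal hreal
        _ = ENNReal.ofReal A * g (x, y) := by rw [hgxy, ENNReal.ofReal_mul hA]
        _ ≤ ENNReal.ofReal A * g (x, y) + ENNReal.ofReal B * S.indicator h (x, y) :=
            le_add_right le_rfl
  -- measurability of g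
  have hφ : AEMeasurable (fun x : EuclideanSpace ℝ (Fin 2) => ENNReal.ofReal |V x|) volume :=
    ENNReal.measurable_ofReal.comp_aemeasurable
      (continuous_abs.measurable.comp_aemeasurable hV.aemeasurable)
  have hgmeas : AEMeasurable g (volume : Measure (EuclideanSpace ℝ (Fin 2) × EuclideanSpace ℝ (Fin 2))) := by
    rw [MeasureTheory.Measure.volume_eq_prod]
    exact (hφ.comp_quasiMeasurePreserving Measure.quasiMeasurePreserving_fst).mul
      (hφ.comp_quasiMeasurePreserving Measure.quasiMeasurePreserving_snd)
  -- finiteness of ∫⁻ g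
  have hVfin : ∫⁻ x : EuclideanSpace ℝ (Fin 2), ENNReal.ofReal |V x| < ⊤ := by
    have := hV.2
    rw [hasFiniteIntegral_iff_norm] at this
    simpa [Real.norm_eq_abs] using this
  have hgint : ∫⁻ p : EuclideanSpace ℝ (Fin 2) × EuclideanSpace ℝ (Fin 2), g p < ⊤ := by
    rw [hgdef, MeasureTheory.Measure.volume_eq_prod, lintegral_prod_mul hφ hφ]
    exact ENNReal.mul_lt_top hVfin hVfin
  have hindint : ∫⁻ p : EuclideanSpace ℝ (Fin 2) × EuclideanSpace ℝ (Fin 2), S.indicator h p < ⊤ := by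
    rw [lintegral_indicator hS]
    exact hroll
  calc ∫⁻ p : EuclideanSpace ℝ (Fin 2) × EuclideanSpace ℝ (Fin 2), ENNReal.ofReal (|V p.1| * (G p.1 p.2 α) ^ 2 * |V p.2|)
      ≤ ∫⁻ p : EuclideanSpace ℝ (Fin 2) × EuclideanSpace ℝ (Fin 2), (ENNReal.ofReal A * g p + ENNReal.ofReal B * S.indicator h p) :=
        lintegral_mono key
    _ = (∫⁻ p : EuclideanSpace ℝ (Fin 2) × EuclideanSpace ℝ (Fin 2), ENNReal.ofReal A * g p)
        + ∫⁻ p : EuclideanSpace ℝ (Fin 2) × EuclideanSpace ℝ (Fin 2), ENNReal.ofReal B * S.indicator h p :=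
        lintegral_add_left' (hgmeas.const_mul _) _
    _ = ENNReal.ofReal A * (∫⁻ p : EuclideanSpace ℝ (Fin 2) × EuclideanSpace ℝ (Fin 2), g p)
        + ENNReal.ofReal B * ∫⁻ p : EuclideanSpace ℝ (Fin 2) × EuclideanSpace ℝ (Fin 2), S.indicator h p := by
        rw [lintegral_const_mul' _ _ ENNReal.ofReal_ne_top,
          lintegral_const_mul' _ _ ENNReal.ofReal_ne_top]
    _ < ⊤ := ENNReal.add_lt_top.2
        ⟨ENNReal.mul_lt_top ENNReal.ofReal_lt_top hgint,
         ENNReal.mul_lt_top ENNReal.ofReal_lt_top hindint⟩
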